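/- For every real q > 1 and all positive definite operators ρ and σ on a finite-dimensional complex Hilbert space, Tr[σ^{1/2}(σ^{−1/2} ρ σ^{−1/2})^q σ^{1/2}] = Tr[ρ^{1/2}(ρ^{1/2} σ⁻¹ ρ^{1/2})^{q−1} ρ^{1/2}]. -/

import Mathlib

open scoped Kronecker ComplexOrder

namespace QIT

variable {n : Type*} [Fintype n] [DecidableEq n]

/-- Operator norm of a matrix, i.e. the norm of the induced operator on Euclidean space. -/
noncomputable def opNorm (M : Matrix n n ℂ) : ℝ :=
  ‖Matrix.toEuclideanCLM (𝕜 := ℂ) M‖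

/-- Functional calculus for Hermitian matrices (junk value `0` on non-Hermitian inputs). -/
noncomputable def matCfc (f : ℝ → ℝ) (M : Matrix n n ℂ) : Matrix n n ℂ :=
  if hM : M.IsHermitian then
    (hM.eigenvectorUnitary : Matrix n n ℂ) *
      Matrix.diagonal (fun i => (f (hM.eigenvalues i) : ℂ)) *
      star (hM.eigenvectorUnitary : Matrix n n ℂ)
  else 0

/-- Matrix logarithm via the functional calculus. -/
noncomputable def mlog (M : Matrix n n ℂ) : Matrix n n ℂ := matCfc Real.log M

/-- Real powers of a matrix via the functional calculus. -/
noncomputable def mpow (M : Matrix n n ℂ) (q : ℝ) : Matrix n n ℂ :=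
  matCfc (fun x => x ^ q) M

/-- Umegaki relative entropy `D(ρ‖σ) = Tr[ρ (log ρ - log σ)]`. -/
noncomputable def relEntropy (ρ σ : Matrix n n ℂ) : ℝ :=
  (Matrix.trace (ρ * (mlog ρ - mlog σ))).re

/-- Belavkin-Staszewski relative entropy `D̂(ρ‖σ) = Tr[ρ log (ρ^{1/2} σ⁻¹ ρ^{1/2})]`. -/
noncomputable def bsEntropy (ρ σ : Matrix n n ℂ) : ℝ :=
  (Matrix.trace (ρ * mlog (mpow ρ (1/2) * σ⁻¹ * mpow ρ (1/2)))).re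

/-- `q`-geometric Rényi divergence
`D̂_q(ρ‖σ) = (q-1)⁻¹ log Tr[σ^{1/2} (σ^{-1/2} ρ σ^{-1/2})^q σ^{1/2}]`. -/
noncomputable def geomRenyi (q : ℝ) (ρ σ : Matrix n n ℂ) : ℝ :=
  (q - 1)⁻¹ *
    Real.log
      (Matrix.trace
        (mpow σ (1/2) * mpow (mpow σ (-(1/2)) * ρ * mpow σ (-(1/2))) q * mpow σ (1/2))).re

/-- Trace norm `‖M‖₁ = Tr ((M† M)^{1/2})`. -/
noncomputable def traceNorm (M : Matrix n n ℂ) : ℝ :=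
  (((Matrix.posSemidef_conjTranspose_mul_self M).1.eigenvectorUnitary : Matrix n n ℂ) *
      Matrix.diagonal (fun i => ((Real.sqrt ((Matrix.posSemidef_conjTranspose_mul_self M).1.eigenvalues i) : ℝ) : ℂ)) *
      (star (Matrix.posSemidef_conjTranspose_mul_self M).1.eigenvectorUnitary : Matrix n n ℂ)).trace.re

/-- Partial trace over the second tensor factor. -/
noncomputable def ptraceRight {a c : Type*} [Fintype a] [Fintype c]
    (M : Matrix (a × c) (a × c) ℂ) : Matrix a a ℂ :=
  fun i j => ∑ k, M (i, k) (j, k)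

/-- Partial trace over the first tensor factor. -/
noncomputable def ptraceLeft {a c : Type*} [Fintype a] [Fintype c]
    (M : Matrix (a × c) (a × c) ℂ) : Matrix c c ℂ :=
  fun i j => ∑ k, M (k, i) (k, j)

/-! With `X = σ^{-1/2} ρ^{1/2}` one has `σ^{-1/2} ρ σ^{-1/2} = X Xᴴ` and
`ρ^{1/2} σ⁻¹ ρ^{1/2} = Xᴴ X`. The polar decomposition `X = U (Xᴴ X)^{1/2}` makes these unitarily
equivalent, so that `(X Xᴴ)^p X = X (Xᴴ X)^p` for every real `p`. Writing
`(X Xᴴ)^q = (X Xᴴ)^{q-1} X Xᴴ` and cycling under the trace turns the left-hand side into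
`Tr[Xᴴ σ X (Xᴴ X)^{q-1}] = Tr[ρ (Xᴴ X)^{q-1}]`, which is also the right-hand side. -/

open Matrix

theorem cfc_unitary_conj {R A : Type*} {p : A → Prop} [CommSemiring R] [StarRing R]
    [MetricSpace R] [IsTopologicalSemiring R] [ContinuousStar R] [Ring A] [StarRing A]
    [TopologicalSpace A] [IsTopologicalRing A] [Algebra R A] [ContinuousFunctionalCalculus R A p]
    [ContinuousMap.UniqueHom R A] (u : unitary A) (f : R → R) (a : A)
    (hf : ContinuousOn f (spectrum R a) := by cfc_cont_tac) (ha : p a := by cfc_tac)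
    (hua : p (u * a * star u) := by cfc_tac) :
    cfc f ((u : A) * a * star u) = u * cfc f a * star u :=
  (StarAlgHomClass.map_cfc (Unitary.conjStarAlgAut R A u) f a hf
    ((continuous_const.mul continuous_id).mul continuous_const) ha hua).symm

theorem matCfc_eq_cfc {M : Matrix n n ℂ} (hM : M.IsHermitian) (f : ℝ → ℝ) :
    matCfc f M = cfc f M := by
  rw [hM.cfc_eq, matCfc, dif_pos hM]
  rfl

theorem isHermitian_matCfc (f : ℝ → ℝ) (M : Matrix n n ℂ) : (matCfc f M).IsHermitian := by
  by_cases hM : M.IsHermitian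
  · rw [matCfc_eq_cfc hM]
    exact cfc_predicate f M
  · rw [matCfc, dif_neg hM]
    exact isHermitian_zero

theorem mpow_eq_cfc {M : Matrix n n ℂ} (hM : M.IsHermitian) (q : ℝ) :
    mpow M q = cfc (fun x : ℝ => x ^ q) M :=
  matCfc_eq_cfc hM _

theorem isHermitian_mpow (M : Matrix n n ℂ) (q : ℝ) : (mpow M q).IsHermitian :=
  isHermitian_matCfc _ M

theorem mpow_zero {M : Matrix n n ℂ} (hM : M.IsHermitian) : mpow M 0 = 1 := by
  simp only [mpow_eq_cfc hM, Real.rpow_zero]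
  exact cfc_const_one ℝ M

theorem mpow_one {M : Matrix n n ℂ} (hM : M.IsHermitian) : mpow M 1 = M := by
  simp only [mpow_eq_cfc hM, Real.rpow_one]
  exact cfc_id' ℝ M

theorem mpow_add {M : Matrix n n ℂ} (hM : M.PosDef) (a b : ℝ) :
    mpow M (a + b) = mpow M a * mpow M b := by
  simp only [mpow_eq_cfc hM.isHermitian]
  rw [← cfc_mul _ _ M (finite_real_spectrum.continuousOn _) (finite_real_spectrum.continuousOn _)]
  refine cfc_congr fun x hx => Real.rpow_add ?_ a b
  rw [hM.isHermitian.spectrum_real_eq_range_eigenvalues] at hx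
  obtain ⟨i, rfl⟩ := hx
  exact hM.eigenvalues_pos i

theorem mpow_add_one {M : Matrix n n ℂ} (hM : M.PosDef) (a : ℝ) :
    mpow M (a + 1) = mpow M a * M := by
  rw [mpow_add hM, mpow_one hM.isHermitian]

theorem mpow_half_mul_mpow_half {M : Matrix n n ℂ} (hM : M.PosDef) :
    mpow M (1/2) * mpow M (1/2) = M := by
  rw [← mpow_add hM, add_halves, mpow_one hM.isHermitian]

theorem mpow_mul_mpow_neg {M : Matrix n n ℂ} (hM : M.PosDef) (a : ℝ) :
    mpow M a * mpow M (-a) = 1 := by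
  rw [← mpow_add hM, add_neg_cancel, mpow_zero hM.isHermitian]

theorem isUnit_mpow {M : Matrix n n ℂ} (hM : M.PosDef) (a : ℝ) : IsUnit (mpow M a) :=
  IsUnit.of_mul_eq_one _ (mpow_mul_mpow_neg hM a)

theorem mpow_neg_one {M : Matrix n n ℂ} (hM : M.PosDef) : mpow M (-1) = M⁻¹ := by
  refine (inv_eq_right_inv ?_).symm
  simpa [mpow_one hM.isHermitian] using mpow_mul_mpow_neg hM 1

theorem trace_mpow_half_mul_mul_mpow_half {M : Matrix n n ℂ} (hM : M.PosDef)
    (N : Matrix n n ℂ) : trace (mpow M (1/2) * N * mpow M (1/2)) = trace (M * N) := by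
  rw [trace_mul_cycle, mpow_half_mul_mpow_half hM]

theorem mpow_neg_half_mul_mul_mpow_neg_half {M : Matrix n n ℂ} (hM : M.PosDef) :
    mpow M (-(1/2)) * M * mpow M (-(1/2)) = 1 := by
  calc mpow M (-(1/2)) * M * mpow M (-(1/2)) = mpow M (-(1/2) + 1 + -(1/2)) := by
        rw [mpow_add hM, mpow_add_one hM]
    _ = 1 := by norm_num [mpow_zero hM.isHermitian]

theorem posDef_conjTranspose_mul_self_of_isUnit {X : Matrix n n ℂ} (hX : IsUnit X) :
    (Xᴴ * X).PosDef :=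
  (posSemidef_conjTranspose_mul_self X).posDef_iff_isUnit.mpr (hX.star.mul hX)

theorem posDef_mul_conjTranspose_self_of_isUnit {X : Matrix n n ℂ} (hX : IsUnit X) :
    (X * Xᴴ).PosDef := by
  simpa only [conjTranspose_conjTranspose] using
    posDef_conjTranspose_mul_self_of_isUnit (X := Xᴴ) hX.star

theorem mpow_mul_conjTranspose_mul {X : Matrix n n ℂ} (hX : IsUnit X) (q : ℝ) :
    mpow (X * Xᴴ) q * X = X * mpow (Xᴴ * X) q := by
  set B := Xᴴ * X with hB_def
  have hB : B.PosDef := posDef_conjTranspose_mul_self_of_isUnit hX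
  -- polar decomposition `X = U B^{1/2}`
  set U := X * mpow B (-(1/2)) with hU_def
  have hX_eq : X = U * mpow B (1/2) := by
    rw [mul_assoc, ← mpow_add hB, neg_add_cancel, mpow_zero hB.isHermitian, mul_one]
  have hU : U ∈ unitary (Matrix n n ℂ) := by
    rw [← unitaryGroup, mem_unitaryGroup_iff']
    calc star U * U = mpow B (-(1/2)) * B * mpow B (-(1/2)) := by
          rw [star_eq_conjTranspose, conjTranspose_mul, (isHermitian_mpow B _).eq]
          simp only [hU_def, hB_def, mul_assoc]
      _ = 1 := mpow_neg_half_mul_mul_mpow_neg_half hB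
  have hXX : X * Xᴴ = U * B * star U := by
    calc X * Xᴴ = U * (mpow B (1/2) * mpow B (1/2)) * star U := by
          conv_lhs => rw [hX_eq]
          rw [conjTranspose_mul, (isHermitian_mpow B _).eq, star_eq_conjTranspose]
          simp only [mul_assoc]
      _ = U * B * star U := by rw [mpow_half_mul_mpow_half hB]
  have hUBU : (U * B * star U).IsHermitian :=
    hXX ▸ (posDef_mul_conjTranspose_self_of_isUnit hX).isHermitian
  have hpow : mpow (U * B * star U) q = U * mpow B q * star U := by
    rw [mpow_eq_cfc hUBU, mpow_eq_cfc hB.isHermitian]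
    exact cfc_unitary_conj ⟨U, hU⟩ _ B (finite_real_spectrum.continuousOn _) hB.isHermitian
      hUBU
  calc mpow (X * Xᴴ) q * X = U * mpow B q * (star U * U) * mpow B (1/2) := by
        rw [hXX, hpow]
        conv_lhs => rw [hX_eq]
        simp only [mul_assoc]
    _ = U * mpow B (1/2) * mpow B q := by
        rw [Unitary.star_mul_self_of_mem hU, mul_one, mul_assoc, ← mpow_add hB, add_comm,
          mpow_add hB, ← mul_assoc]
    _ = X * mpow B q := by rw [← hX_eq]

theorem trace_mul_mpow_mul_conjTranspose_self {X : Matrix n n ℂ} (hX : IsUnit X)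
    (S : Matrix n n ℂ) (q : ℝ) :
    trace (S * mpow (X * Xᴴ) q) = trace (Xᴴ * S * X * mpow (Xᴴ * X) (q - 1)) := by
  have hq : mpow (X * Xᴴ) q = mpow (X * Xᴴ) (q - 1) * (X * Xᴴ) := by
    rw [← mpow_add_one (posDef_mul_conjTranspose_self_of_isUnit hX), sub_add_cancel]
  rw [hq, ← mul_assoc _ X, mpow_mul_conjTranspose_mul hX, ← mul_assoc, trace_mul_comm]
  simp only [mul_assoc]

theorem trace_geom_renyi_flip_general {n : Type*} [Fintype n] [DecidableEq n]
    (q : ℝ) (ρ σ : Matrix n n ℂ) (hρ : ρ.PosDef) (hσ : σ.PosDef) :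
    Matrix.trace
        (mpow σ (1/2) * mpow (mpow σ (-(1/2)) * ρ * mpow σ (-(1/2))) q * mpow σ (1/2)) =
      Matrix.trace
        (mpow ρ (1/2) * mpow (mpow ρ (1/2) * σ⁻¹ * mpow ρ (1/2)) (q - 1) * mpow ρ (1/2)) := by
  set X := mpow σ (-(1/2)) * mpow ρ (1/2) with hX_def
  have hX : IsUnit X := (isUnit_mpow hσ _).mul (isUnit_mpow hρ _)
  have hXH : Xᴴ = mpow ρ (1/2) * mpow σ (-(1/2)) := by
    rw [conjTranspose_mul, (isHermitian_mpow _ _).eq, (isHermitian_mpow _ _).eq]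
  have hA : mpow σ (-(1/2)) * ρ * mpow σ (-(1/2)) = X * Xᴴ := by
    conv_lhs => rw [← mpow_half_mul_mpow_half hρ]
    rw [hXH]
    simp only [hX_def, mul_assoc]
  have hB : mpow ρ (1/2) * σ⁻¹ * mpow ρ (1/2) = Xᴴ * X := by
    rw [← mpow_neg_one hσ, show (-1 : ℝ) = -(1/2) + -(1/2) by norm_num, mpow_add hσ, hXH]
    simp only [hX_def, mul_assoc]
  have hXσX : Xᴴ * σ * X = ρ := by
    calc Xᴴ * σ * X
          = mpow ρ (1/2) * (mpow σ (-(1/2)) * σ * mpow σ (-(1/2))) * mpow ρ (1/2) := by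
          rw [hXH]
          simp only [hX_def, mul_assoc]
      _ = ρ := by
          rw [mpow_neg_half_mul_mul_mpow_neg_half hσ, mul_one, mpow_half_mul_mpow_half hρ]
  rw [hA, hB, trace_mpow_half_mul_mul_mpow_half hσ, trace_mul_mpow_mul_conjTranspose_self hX,
    hXσX, trace_mpow_half_mul_mul_mpow_half hρ]

/-- For every real `q > 1` and positive definite `ρ`, `σ`:
`Tr[σ^{1/2} (σ^{-1/2} ρ σ^{-1/2})^q σ^{1/2}] = Tr[ρ^{1/2} (ρ^{1/2} σ⁻¹ ρ^{1/2})^{q-1} ρ^{1/2}]`. -/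
theorem trace_geom_renyi_flip {n : Type*} [Fintype n] [DecidableEq n]
    (q : ℝ) (hq : 1 < q) (ρ σ : Matrix n n ℂ) (hρ : ρ.PosDef) (hσ : σ.PosDef) :
    Matrix.trace
        (mpow σ (1/2) * mpow (mpow σ (-(1/2)) * ρ * mpow σ (-(1/2))) q * mpow σ (1/2)) =
      Matrix.trace
        (mpow ρ (1/2) * mpow (mpow ρ (1/2) * σ⁻¹ * mpow ρ (1/2)) (q - 1) * mpow ρ (1/2)) :=
  trace_geom_renyi_flip_general q ρ σ hρ hσ

end QIT
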